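/- Let Δ be a simplicial complex on [n] with β_{k-1}(Δ) = 0, and let X be an (n,k)-complex of Δ with full (k-1)-skeleton K^{k-1}_n. Then any two of the following imply the third, and any two are equivalent to X being a k-tree: (1) |X_k| = C(n-1, k); (2) β_k(X) = 0; (3) β_{k-1}(X) = 0. -/

import Mathlib

open Finset

/-- Sign entry of the simplicial boundary matrix between faces `σ ⊆ τ` with `|σ|+1 = |τ|`. -/
def bdE {n : ℕ} (σ τ : Finset (Fin n)) : ℤ :=
  if σ ⊆ τ ∧ σ.card + 1 = τ.card then
    ∑ a ∈ τ \ σ, (-1 : ℤ) ^ (τ.filter (fun b => b < a)).card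
  else 0

/-- Faces of `X` of cardinality `c` (i.e. dimension `c-1`). -/
def cF {n : ℕ} (X : Finset (Finset (Fin n))) (c : ℕ) : Finset (Finset (Fin n)) :=
  X.filter (fun s => s.card = c)

/-- Relative faces of the pair `(X,Y)` of cardinality `c`. -/
def relF {n : ℕ} (X Y : Finset (Finset (Fin n))) (c : ℕ) : Finset (Finset (Fin n)) :=
  (X \ Y).filter (fun s => s.card = c)

/-- Relative boundary matrix from cardinality level `c` to level `c-1`. -/
def dMat {n : ℕ} (X Y : Finset (Finset (Fin n))) (c : ℕ) :
    Matrix ↥(relF X Y (c - 1)) ↥(relF X Y c) ℤ :=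
  Matrix.of fun σ τ => bdE σ.1 τ.1

/-- Relative boundary map (as a linear map on integer chains). -/
noncomputable def dLin {n : ℕ} (X Y : Finset (Finset (Fin n))) (c : ℕ) :
    (↥(relF X Y c) → ℤ) →ₗ[ℤ] (↥(relF X Y (c - 1)) → ℤ) :=
  Matrix.toLin' (dMat X Y c)

/-- Relative simplicial homology of the pair `(X,Y)` at cardinality level `c`
(i.e. the homology group `H_{c-1}(X,Y)`; for `Y = ∅` this is reduced homology `H̃_{c-1}(X)`). -/
abbrev RelH {n : ℕ} (X Y : Finset (Finset (Fin n))) (c : ℕ) :=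
  LinearMap.ker (dLin X Y c) ⧸
    Submodule.comap (LinearMap.ker (dLin X Y c)).subtype (LinearMap.range (dLin X Y (c + 1)))

/-- Relative boundary matrix over `ℚ`. -/
noncomputable def qMat {n : ℕ} (X Y : Finset (Finset (Fin n))) (c : ℕ) :
    Matrix ↥(relF X Y (c - 1)) ↥(relF X Y c) ℚ :=
  (dMat X Y c).map fun z => (z : ℚ)

/-- Relative Betti number at cardinality level `c`, i.e. `β_{c-1}(X,Y)`. -/
noncomputable def bettiL {n : ℕ} (X Y : Finset (Finset (Fin n))) (c : ℕ) : ℕ :=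
  ((relF X Y c).card - (qMat X Y c).rank) - (qMat X Y (c + 1)).rank

/-- An abstract simplicial complex (including the empty face). -/
def IsComplex {n : ℕ} (X : Finset (Finset (Fin n))) : Prop :=
  ∅ ∈ X ∧ ∀ s ∈ X, ∀ t ⊆ s, t ∈ X

/-- `X` is an `(n,k)`-complex of `Δ`: a complex with `K^{k-1} ∩ Δ ⊆ X ⊆ K^k ∩ Δ`. -/
def KCplx {n : ℕ} (Δ : Finset (Finset (Fin n))) (k : ℕ) (X : Finset (Finset (Fin n))) : Prop :=
  IsComplex X ∧ Δ.filter (fun s => s.card ≤ k) ⊆ X ∧ X ⊆ Δ.filter (fun s => s.card ≤ k + 1)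

/-- `X` is a `k`-dimensional spanning tree of `Γ`: an `(n,k)`-complex of `Γ` with
`β_k(X) = 0` and `|X_k| = rank ∂_k^Γ`. -/
def IsTree {n : ℕ} (Γ : Finset (Finset (Fin n))) (k : ℕ) (X : Finset (Finset (Fin n))) : Prop :=
  KCplx Γ k X ∧ bettiL X ∅ (k + 1) = 0 ∧ (cF X (k + 1)).card = (qMat Γ ∅ (k + 1)).rank

/-! With `N = C(n-1,k)` and `r` the rank of `∂_{k+1}` on `X`, the theorem is linear arithmetic
in `|X_k|`, `r` and `N`: as `X` has no faces above dimension `k`, `β_k(X) = |X_k| - r`; as its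
`(k-1)`-skeleton is full, `β_{k-1}(X) = N - r` with `r ≤ N`, and in the same way `β_{k-1}(Δ) = 0`
forces `rank ∂_{k+1}^Δ = N`. The facts about full skeleta come from the full simplex on `[n]`,
whose boundary maps satisfy `rank ∂_{c+1} = C(n-1,c)`: the cones `∂(0 ∪ ρ)` give the lower
bound, and `∂∂ = 0` together with Pascal's rule the upper one. -/

variable {n : ℕ}

section Boundary

theorem bdE_insert {σ : Finset (Fin n)} {a : Fin n} (ha : a ∉ σ) :
    bdE σ (insert a σ) = (-1) ^ #(σ.filter (· < a)) := by
  rw [bdE, if_pos ⟨subset_insert a σ, (card_insert_of_notMem ha).symm⟩,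
    insert_sdiff_cancel ha, sum_singleton, filter_insert, if_neg (lt_irrefl a)]

theorem exists_eq_insert_of_bdE_ne_zero {σ τ : Finset (Fin n)} (h : bdE σ τ ≠ 0) :
    ∃ a ∉ σ, τ = insert a σ := by
  by_cases hστ : σ ⊆ τ ∧ #σ + 1 = #τ
  · obtain ⟨a, ha, rfl⟩ := exists_eq_insert_iff.2 hστ
    exact ⟨a, ha, rfl⟩
  · exact absurd (if_neg hστ) h

theorem bdE_insert_of_ne {σ ρ : Finset (Fin n)} {a : Fin n} (hσ : a ∉ σ) (hρ : a ∉ ρ)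
    (h : σ ≠ ρ) : bdE σ (insert a ρ) = 0 := by
  by_contra h0
  obtain ⟨b, hb, hρσ⟩ := exists_eq_insert_of_bdE_ne_zero h0
  obtain rfl : a = b := (mem_insert.1 (hρσ ▸ mem_insert_self a ρ)).resolve_right hσ
  exact h (by rw [← erase_insert hσ, ← hρσ, erase_insert hρ])

theorem bdE_mul_bdE_add_bdE_mul_bdE {σ : Finset (Fin n)} {a b : Fin n} (hab : a < b)
    (ha : a ∉ σ) (hb : b ∉ σ) :
    bdE σ (insert a σ) * bdE (insert a σ) (insert a (insert b σ)) +
      bdE σ (insert b σ) * bdE (insert b σ) (insert a (insert b σ)) = 0 := by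
  have hbA : b ∉ insert a σ := by simp [hab.ne', hb]
  have haB : a ∉ insert b σ := by simp [hab.ne, ha]
  have haF : a ∉ σ.filter (· < b) := by simp [ha]
  rw [insert_comm a b σ, bdE_insert hbA, ← insert_comm a b σ, bdE_insert haB, bdE_insert ha,
    bdE_insert hb, filter_insert, if_pos hab, card_insert_of_notMem haF, filter_insert,
    if_neg (not_lt.2 hab.le), pow_succ]
  ring

theorem sum_bdE_mul_bdE {σ υ : Finset (Fin n)} {S : Finset (Finset (Fin n))}
    (hS : ∀ a ∉ σ, insert a σ ⊆ υ → insert a σ ∈ S) : ∑ τ ∈ S, bdE σ τ * bdE τ υ = 0 := by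
  by_cases h : ∃ a b, a < b ∧ a ∉ σ ∧ b ∉ σ ∧ υ = insert a (insert b σ)
  · obtain ⟨a, b, hab, ha, hb, rfl⟩ := h
    have hne : insert a σ ≠ insert b σ := fun h =>
      ha ((mem_insert.1 (h ▸ mem_insert_self a σ)).resolve_left hab.ne)
    rw [← sum_subset (s₁ := {insert a σ, insert b σ}), sum_pair hne,
      bdE_mul_bdE_add_bdE_mul_bdE hab ha hb]
    · rw [insert_subset_iff, singleton_subset_iff]
      exact ⟨hS a ha (insert_subset_insert a (subset_insert b σ)),
        hS b hb (by rw [insert_comm]; exact insert_subset_insert b (subset_insert a σ))⟩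
    · intro τ _ hτ
      by_contra h0
      obtain ⟨x, hx, rfl⟩ := exists_eq_insert_of_bdE_ne_zero (left_ne_zero_of_mul h0)
      obtain ⟨y, -, hυ⟩ := exists_eq_insert_of_bdE_ne_zero (right_ne_zero_of_mul h0)
      have hxυ : x ∈ insert a (insert b σ) := by rw [hυ]; simp
      simp only [mem_insert, hx, or_false] at hxυ
      rcases hxυ with rfl | rfl <;> simp at hτ
  · refine sum_eq_zero fun τ _ => ?_
    by_contra h0
    obtain ⟨x, hx, rfl⟩ := exists_eq_insert_of_bdE_ne_zero (left_ne_zero_of_mul h0)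
    obtain ⟨y, hy, rfl⟩ := exists_eq_insert_of_bdE_ne_zero (right_ne_zero_of_mul h0)
    obtain ⟨hyx, hyσ⟩ : y ≠ x ∧ y ∉ σ := by simpa using hy
    rcases lt_or_gt_of_ne hyx with hlt | hlt
    · exact h ⟨y, x, hlt, hyσ, hx, rfl⟩
    · exact h ⟨x, y, hlt, hx, hyσ, insert_comm y x σ⟩

end Boundary

section BoundaryMatrix

theorem rank_qMat_le_of_relF_subset {X Y X' Y' : Finset (Finset (Fin n))} {c : ℕ}
    (h₁ : relF X Y (c - 1) ⊆ relF X' Y' (c - 1)) (h₂ : relF X Y c ⊆ relF X' Y' c) :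
    (qMat X Y c).rank ≤ (qMat X' Y' c).rank := by
  have h : qMat X Y c =
      (qMat X' Y' c).submatrix (fun σ => ⟨σ.1, h₁ σ.2⟩) (fun τ => ⟨τ.1, h₂ τ.2⟩) :=
    Matrix.ext fun _ _ => rfl
  exact h ▸ Matrix.rank_submatrix_le _ _ _

theorem rank_qMat_eq_of_relF_eq {X Y X' Y' : Finset (Finset (Fin n))} {c : ℕ}
    (h₁ : relF X Y (c - 1) = relF X' Y' (c - 1)) (h₂ : relF X Y c = relF X' Y' c) :
    (qMat X Y c).rank = (qMat X' Y' c).rank :=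
  le_antisymm (rank_qMat_le_of_relF_subset h₁.le h₂.le)
    (rank_qMat_le_of_relF_subset h₁.ge h₂.ge)

theorem rank_qMat_le_card (X Y : Finset (Finset (Fin n))) (c : ℕ) :
    (qMat X Y c).rank ≤ #(relF X Y c) :=
  (Matrix.rank_le_card_width _).trans (Fintype.card_coe _).le

theorem qMat_zero (X Y : Finset (Finset (Fin n))) : qMat X Y 0 = 0 := by
  ext σ τ
  have hσ : #σ.1 = 0 := (mem_filter.1 σ.2).2
  have hτ : #τ.1 = 0 := (mem_filter.1 τ.2).2
  simp [qMat, dMat, bdE, hσ, hτ]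

theorem rank_qMat_add_rank_qMat_le {X : Finset (Finset (Fin n))}
    (hX : ∀ s ∈ X, ∀ t ⊆ s, t ∈ X) (c : ℕ) :
    (qMat X ∅ (c + 1)).rank + (qMat X ∅ (c + 2)).rank ≤ #(relF X ∅ (c + 1)) := by
  refine (Fintype.card_coe (relF X ∅ (c + 1))) ▸ Matrix.rank_add_rank_le_card_of_mul_eq_zero
    (A := qMat X ∅ (c + 1)) (B := qMat X ∅ (c + 2)) ?_
  ext σ υ
  have hσ : #σ.1 = c := (mem_filter.1 σ.2).2
  have hυ : υ.1 ∈ X := (mem_sdiff.1 (mem_filter.1 υ.2).1).1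
  have hsum : ∑ τ ∈ relF X ∅ (c + 1), bdE σ.1 τ * bdE τ υ.1 = 0 :=
    sum_bdE_mul_bdE fun a ha haυ => by
      simp [relF, hX _ hυ _ haυ, card_insert_of_notMem ha, hσ]
  simpa [Matrix.mul_apply, qMat, dMat,
    sum_attach (relF X ∅ (c + 1)) fun τ => (bdE σ.1 τ * bdE τ υ.1 : ℚ)]
    using congrArg (Int.cast : ℤ → ℚ) hsum

end BoundaryMatrix

section Simplex

theorem relF_univ_empty (c : ℕ) :
    relF (univ : Finset (Finset (Fin n))) ∅ c = powersetCard c univ := by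
  ext s
  simp [relF]

theorem card_relF_univ_empty (c : ℕ) :
    #(relF (univ : Finset (Finset (Fin n))) ∅ c) = n.choose c := by
  simp [relF_univ_empty]

-- The columns `∂(0 ∪ ρ)` with `0 ∉ ρ` contain a diagonal minor with entries `±1`.
theorem choose_le_rank_qMat_univ [NeZero n] (c : ℕ) :
    (n - 1).choose c ≤ (qMat (univ : Finset (Finset (Fin n))) ∅ (c + 1)).rank := by
  set P := powersetCard c (univ.erase (0 : Fin n))
  have hP : ∀ ρ ∈ P, (0 : Fin n) ∉ ρ ∧ #ρ = c := fun ρ hρ => by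
    obtain ⟨hsub, hcard⟩ := mem_powersetCard.1 hρ
    exact ⟨fun h => by simpa using hsub h, hcard⟩
  let row (ρ : P) : relF (univ : Finset (Finset (Fin n))) ∅ (c + 1 - 1) :=
    ⟨ρ.1, by simp [relF_univ_empty, (hP _ ρ.2).2]⟩
  let col (ρ : P) : relF (univ : Finset (Finset (Fin n))) ∅ (c + 1) :=
    ⟨insert 0 ρ.1, by simp [relF_univ_empty, card_insert_of_notMem (hP _ ρ.2).1, (hP _ ρ.2).2]⟩
  set w : P → ℚ := fun ρ => bdE ρ.1 (insert 0 ρ.1)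
  have hminor : (qMat univ ∅ (c + 1)).submatrix row col = Matrix.diagonal w := by
    ext ρ ρ'
    by_cases h : ρ = ρ'
    · subst h
      simp [qMat, dMat, row, col, w]
    · rw [Matrix.diagonal_apply_ne _ h]
      simp [qMat, dMat, row, col,
        bdE_insert_of_ne (hP _ ρ.2).1 (hP _ ρ'.2).1 (Subtype.coe_injective.ne h)]
  have hw : ∀ ρ, w ρ ≠ 0 := fun ρ => by simp [w, bdE_insert (hP _ ρ.2).1]
  calc
    (n - 1).choose c = Fintype.card P := by
      rw [Fintype.card_coe, card_powersetCard, card_erase_of_mem (mem_univ _), card_univ,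
        Fintype.card_fin]
    _ = (Matrix.diagonal w).rank := by
      rw [Matrix.rank_diagonal]
      exact (Fintype.card_congr (Equiv.subtypeUnivEquiv hw)).symm
    _ ≤ _ := hminor ▸ Matrix.rank_submatrix_le _ _ _

theorem rank_qMat_univ_succ [NeZero n] (c : ℕ) :
    (qMat (univ : Finset (Finset (Fin n))) ∅ (c + 1)).rank = (n - 1).choose c := by
  have hsum :=
    rank_qMat_add_rank_qMat_le (X := (univ : Finset (Finset (Fin n)))) (fun _ _ _ _ => mem_univ _) c
  rw [card_relF_univ_empty] at hsum
  have hpascal : n.choose (c + 1) = (n - 1).choose c + (n - 1).choose (c + 1) := by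
    obtain ⟨m, rfl⟩ := Nat.exists_eq_succ_of_ne_zero (NeZero.ne n)
    exact Nat.choose_succ_succ' m c
  have h₁ := choose_le_rank_qMat_univ (n := n) c
  have h₂ : (n - 1).choose (c + 1) ≤ (qMat (univ : Finset (Finset (Fin n))) ∅ (c + 2)).rank :=
    choose_le_rank_qMat_univ (c + 1)
  omega

theorem rank_qMat_univ_succ_le (n c : ℕ) :
    (qMat (univ : Finset (Finset (Fin n))) ∅ (c + 1)).rank ≤ (n - 1).choose c := by
  cases n with
  | zero =>
    have h := rank_qMat_le_card (univ : Finset (Finset (Fin 0))) ∅ (c + 1)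
    rw [card_relF_univ_empty, Nat.choose_zero_succ] at h
    omega
  | succ m => exact (rank_qMat_univ_succ c).le

theorem rank_qMat_univ_add_choose (n c : ℕ) :
    (qMat (univ : Finset (Finset (Fin n))) ∅ c).rank + (n - 1).choose c = n.choose c := by
  rcases c with _ | c
  · simp [qMat_zero]
  cases n with
  | zero =>
    have h := rank_qMat_le_card (univ : Finset (Finset (Fin 0))) ∅ (c + 1)
    rw [card_relF_univ_empty, Nat.choose_zero_succ] at h
    simp only [Nat.zero_sub, Nat.choose_zero_succ]
    omega
  | succ m => rw [rank_qMat_univ_succ, Nat.choose_succ_succ' m c, Nat.add_sub_cancel]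

end Simplex

section Betti

theorem bettiL_add_rank_eq_choose {W : Finset (Finset (Fin n))} {k : ℕ}
    (hW : ∀ s : Finset (Fin n), #s ≤ k → s ∈ W) :
    bettiL W ∅ k + (qMat W ∅ (k + 1)).rank = (n - 1).choose k := by
  have hskel : ∀ c ≤ k, relF W ∅ c = relF univ ∅ c := fun c hc => by
    ext s
    simp only [relF, sdiff_empty, mem_filter, mem_univ, true_and, and_iff_right_iff_imp]
    exact fun hs => hW s (hs ▸ hc)
  have hsub : ∀ c, relF W ∅ c ⊆ relF univ ∅ c := fun c =>
    filter_subset_filter _ (sdiff_subset_sdiff (subset_univ W) subset_rfl)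
  have hcard : #(relF W ∅ k) = n.choose k := by
    rw [hskel k le_rfl, card_relF_univ_empty]
  have hbot : (qMat W ∅ k).rank + (n - 1).choose k = n.choose k := by
    rw [rank_qMat_eq_of_relF_eq (hskel _ (Nat.sub_le k 1)) (hskel k le_rfl),
      rank_qMat_univ_add_choose]
  have htop : (qMat W ∅ (k + 1)).rank ≤ (n - 1).choose k :=
    (rank_qMat_le_of_relF_subset (hsub _) (hsub _)).trans
      (rank_qMat_univ_succ_le n k)
  unfold bettiL
  omega

theorem bettiL_succ_add_rank_eq_card {X : Finset (Finset (Fin n))} {k : ℕ}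
    (hX : ∀ s ∈ X, #s ≤ k + 1) :
    bettiL X ∅ (k + 1) + (qMat X ∅ (k + 1)).rank = #(cF X (k + 1)) := by
  have hcard : #(relF X ∅ (k + 1)) = #(cF X (k + 1)) := by simp [relF, cF]
  have hempty : #(relF X ∅ (k + 2)) = 0 :=
    card_eq_zero.2 <| filter_eq_empty_iff.2 fun s hs hs' => by
      have := hX s (mem_sdiff.1 hs).1
      omega
  have hle := rank_qMat_le_card X ∅ (k + 1)
  have hzero : (qMat X ∅ (k + 1 + 1)).rank = 0 :=
    Nat.eq_zero_of_le_zero (hempty ▸ rank_qMat_le_card X ∅ (k + 2))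
  rw [bettiL, hzero]
  omega

end Betti

theorem stmt10_general (n k : ℕ) (Δ X : Finset (Finset (Fin n)))
    (hβΔ : bettiL Δ ∅ k = 0) (hX : KCplx Δ k X)
    (hfull : ∀ s : Finset (Fin n), s.card ≤ k → s ∈ X) :
    (((cF X (k + 1)).card = (n - 1).choose k ∧ bettiL X ∅ (k + 1) = 0) →
        bettiL X ∅ k = 0) ∧
    (((cF X (k + 1)).card = (n - 1).choose k ∧ bettiL X ∅ k = 0) →
        bettiL X ∅ (k + 1) = 0) ∧
    ((bettiL X ∅ (k + 1) = 0 ∧ bettiL X ∅ k = 0) →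
        (cF X (k + 1)).card = (n - 1).choose k) ∧
    (((cF X (k + 1)).card = (n - 1).choose k ∧ bettiL X ∅ (k + 1) = 0) ↔ IsTree Δ k X) ∧
    (((cF X (k + 1)).card = (n - 1).choose k ∧ bettiL X ∅ k = 0) ↔ IsTree Δ k X) ∧
    ((bettiL X ∅ (k + 1) = 0 ∧ bettiL X ∅ k = 0) ↔ IsTree Δ k X) := by
  have hXΔ : X ⊆ Δ.filter (fun s => s.card ≤ k + 1) := hX.2.2
  have hβX := bettiL_add_rank_eq_choose hfull
  have hβXtop := bettiL_succ_add_rank_eq_card fun s hs => (mem_filter.1 (hXΔ hs)).2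
  have hrankΔ : (qMat Δ ∅ (k + 1)).rank = (n - 1).choose k := by
    have := bettiL_add_rank_eq_choose fun s hs => (mem_filter.1 (hXΔ (hfull s hs))).1
    omega
  have htree : IsTree Δ k X ↔
      (cF X (k + 1)).card = (n - 1).choose k ∧ bettiL X ∅ (k + 1) = 0 := by
    rw [IsTree, hrankΔ]
    exact ⟨fun ⟨_, hβ, hcard⟩ => ⟨hcard, hβ⟩, fun ⟨hcard, hβ⟩ => ⟨hX, hβ, hcard⟩⟩
  rw [htree]
  omega

/-- Kalai's two-out-of-three criterion: let `Δ` be a complex on `[n]` with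
`β_{k-1}(Δ) = 0` and `X` an `(n,k)`-complex of `Δ` with full `(k-1)`-skeleton.  Then any
two of (1) `|X_k| = C(n-1,k)`, (2) `β_k(X) = 0`, (3) `β_{k-1}(X) = 0` imply the third, and
any two of them are equivalent to `X` being a `k`-tree of `Δ`. -/
theorem stmt10 (n k : ℕ) (Δ X : Finset (Finset (Fin n)))
    (hΔ : IsComplex Δ) (hβΔ : bettiL Δ ∅ k = 0) (hX : KCplx Δ k X)
    (hfull : ∀ s : Finset (Fin n), s.card ≤ k → s ∈ X) :
    (((cF X (k + 1)).card = (n - 1).choose k ∧ bettiL X ∅ (k + 1) = 0) →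
        bettiL X ∅ k = 0) ∧
    (((cF X (k + 1)).card = (n - 1).choose k ∧ bettiL X ∅ k = 0) →
        bettiL X ∅ (k + 1) = 0) ∧
    ((bettiL X ∅ (k + 1) = 0 ∧ bettiL X ∅ k = 0) →
        (cF X (k + 1)).card = (n - 1).choose k) ∧
    (((cF X (k + 1)).card = (n - 1).choose k ∧ bettiL X ∅ (k + 1) = 0) ↔ IsTree Δ k X) ∧
    (((cF X (k + 1)).card = (n - 1).choose k ∧ bettiL X ∅ k = 0) ↔ IsTree Δ k X) ∧
    ((bettiL X ∅ (k + 1) = 0 ∧ bettiL X ∅ k = 0) ↔ IsTree Δ k X) :=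
  stmt10_general n k Δ X hβΔ hX hfull
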